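/- arXiv:math/0504110 — 3 statements merged into one kernel-verified Lean document; each statement's English description precedes it below -/
import Mathlib

section
/- Let k ≥ 1 and let (X_1, ..., X_{k+1}) be uniformly distributed on the set of (k+1)-tuples of integers ≥ -1 summing to 0. Then E[X_1] = 0 and Var(X_1) = 2k/(k+2). -/
open Finset

/-- Reflected hockey-stick. -/
private lemma aux_base (b n : ℕ) :
    ∑ j ∈ range (n + 1), (n - j + b).choose b = (n + b + 1).choose (b + 1) := by
  have h := Finset.sum_range_reflect (fun j => (j + b).choose b) (n + 1)
  simp only [Nat.add_sub_cancel] at h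
  rw [← Nat.sum_range_add_choose n b, ← h]

/-- Upper-index Vandermonde convolution. -/
private lemma aux_vander (a : ℕ) : ∀ b n : ℕ,
    ∑ j ∈ range (n + 1), (j + a).choose a * (n - j + b).choose b
      = (n + a + b + 1).choose (a + b + 1) := by
  induction a with
  | zero =>
    intro b n
    simp only [Nat.add_zero, Nat.choose_zero_right, one_mul, Nat.zero_add]
    exact aux_base b n
  | succ a ih =>
    intro b n
    have h1 : ∀ j : ℕ, (j + (a + 1)).choose (a + 1)
        = ∑ i ∈ range (j + 1), (i + a).choose a := by
      intro j
      rw [Nat.sum_range_add_choose j a]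
      try (congr 1 <;> omega)
    calc ∑ j ∈ range (n + 1), (j + (a + 1)).choose (a + 1) * (n - j + b).choose b
        = ∑ j ∈ range (n + 1), ∑ i ∈ range (j + 1),
            (i + a).choose a * (n - j + b).choose b := by
          refine Finset.sum_congr rfl fun j _ => ?_
          rw [h1, Finset.sum_mul]
      _ = ∑ i ∈ range (n + 1), ∑ j ∈ Finset.Ico i (n + 1),
            (i + a).choose a * (n - j + b).choose b := by
          simp only [Finset.range_eq_Ico]
          exact (Finset.sum_Ico_Ico_comm 0 (n + 1)
            (fun i j => (i + a).choose a * (n - j + b).choose b)).symm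
      _ = ∑ i ∈ range (n + 1), (i + a).choose a * (n - i + (b + 1)).choose (b + 1) := by
          refine Finset.sum_congr rfl fun i hi => ?_
          rw [Finset.mem_range] at hi
          rw [← Finset.mul_sum]
          congr 1
          rw [Finset.sum_Ico_eq_sum_range]
          have hni : n + 1 - i = (n - i) + 1 := by omega
          rw [hni]
          have heq : ∀ t ∈ range ((n - i) + 1),
              (n - (i + t) + b).choose b = ((n - i) - t + b).choose b := by
            intro t ht
            congr 2
            omega
          rw [Finset.sum_congr rfl heq, aux_base b (n - i)]
          try (congr 1 <;> omega)
      _ = (n + a + (b + 1) + 1).choose (a + (b + 1) + 1) := ih (b + 1) n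
      _ = (n + (a + 1) + b + 1).choose (a + 1 + b + 1) := by
          congr 1 <;> omega

/-- Fibering a sum over tuples by the first coordinate. -/
private lemma aux_fiber {M : Type*} [AddCommMonoid M] (m n : ℕ) (f : ℕ → M) :
    ∑ y ∈ Finset.Nat.antidiagonalTuple (m + 1) n, f (y 0)
      = ∑ j ∈ range (n + 1), (Finset.Nat.antidiagonalTuple m (n - j)).card • f j := by
  have hconst : ∀ j ∈ range (n + 1),
      (Finset.Nat.antidiagonalTuple m (n - j)).card • f j
        = ∑ _z ∈ Finset.Nat.antidiagonalTuple m (n - j), f j := by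
    intro j _
    rw [Finset.sum_const]
  rw [Finset.sum_congr rfl hconst, Finset.sum_sigma']
  refine Finset.sum_nbij' (fun y => ⟨y 0, Fin.tail y⟩)
    (fun p => Fin.cons p.1 p.2) ?_ ?_ ?_ ?_ ?_
  · intro y hy
    rw [Finset.Nat.mem_antidiagonalTuple, Fin.sum_univ_succ] at hy
    simp only [Finset.mem_sigma, Finset.mem_range, Finset.Nat.mem_antidiagonalTuple]
    have h2 : ∑ i : Fin m, Fin.tail y i = ∑ i : Fin m, y i.succ := rfl
    omega
  · rintro ⟨j, z⟩ hp
    simp only [Finset.mem_sigma, Finset.mem_range, Finset.Nat.mem_antidiagonalTuple] at hp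
    rw [Finset.Nat.mem_antidiagonalTuple, Fin.sum_univ_succ]
    simp only [Fin.cons_zero, Fin.cons_succ]
    omega
  · intro y _
    exact Fin.cons_self_tail y
  · rintro ⟨j, z⟩ _
    simp [Fin.tail_cons]
  · intro y _
    rfl

/-- Stars and bars: the number of `(m+1)`-tuples of naturals summing to `n`. -/
private lemma aux_card : ∀ m n : ℕ,
    (Finset.Nat.antidiagonalTuple (m + 1) n).card = (n + m).choose m := by
  intro m
  induction m with
  | zero =>
    intro n
    rw [Finset.Nat.antidiagonalTuple_one]
    simp
  | succ m ih =>
    intro n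
    have h := aux_fiber (m + 1) n (fun _ => (1 : ℕ))
    simp only [smul_eq_mul, mul_one] at h
    have hcard : ∑ y ∈ Finset.Nat.antidiagonalTuple (m + 1 + 1) n, (1 : ℕ)
        = (Finset.Nat.antidiagonalTuple (m + 1 + 1) n).card := by
      rw [Finset.sum_const, smul_eq_mul, mul_one]
    rw [← hcard, h, Finset.sum_congr rfl (fun j _ => ih (n - j)), aux_base m n]
    try (congr 1 <;> omega)

/-- The main counting sums. -/
private lemma aux_Rsum (k a : ℕ) (hk : 1 ≤ k) :
    ∑ y ∈ Finset.Nat.antidiagonalTuple (k + 1) (k + 1), (y 0 + a).choose a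
      = (2 * k + 1 + a).choose (k + a) := by
  obtain ⟨k', rfl⟩ : ∃ k', k = k' + 1 := ⟨k - 1, by omega⟩
  rw [aux_fiber (k' + 1) (k' + 1 + 1) (fun t => (t + a).choose a)]
  simp only [smul_eq_mul]
  rw [Finset.sum_congr rfl (fun j _ => by rw [aux_card k' (k' + 1 + 1 - j)])]
  rw [Finset.sum_congr rfl (fun j (_ : j ∈ range (k' + 1 + 1 + 1)) =>
    (mul_comm ((k' + 1 + 1 - j + k').choose k') ((j + a).choose a)))]
  rw [aux_vander a k' (k' + 1 + 1)]
  congr 1 <;> omega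

private lemma aux_ch2 (p : ℕ) : 2 * (p + 2).choose 2 = (p + 2) * (p + 1) := by
  rw [Nat.choose_two_right]
  have h : 2 ∣ (p + 2) * (p + 2 - 1) := by
    have h2 := (Nat.even_mul_succ_self (p + 1)).two_dvd
    rw [show p + 2 - 1 = p + 1 from rfl, mul_comm]
    exact h2
  rw [Nat.mul_div_cancel' h]
  congr 1

/-- Transfer sums over `T` to sums over tuples of naturals. -/
private lemma aux_Tsum {k : ℕ} (T : Finset (Fin (k + 1) → ℤ))
    (hT : ∀ x, x ∈ T ↔ ((∀ i, (-1 : ℤ) ≤ x i) ∧ ∑ i, x i = 0)) (g : ℤ → ℝ) :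
    ∑ x ∈ T, g (x 0)
      = ∑ y ∈ Finset.Nat.antidiagonalTuple (k + 1) (k + 1), g ((y 0 : ℤ) - 1) := by
  refine Finset.sum_nbij' (fun x i => (x i + 1).toNat) (fun y i => (y i : ℤ) - 1)
    ?_ ?_ ?_ ?_ ?_
  · intro x hx
    obtain ⟨h1, h2⟩ := (hT x).1 hx
    rw [Finset.Nat.mem_antidiagonalTuple]
    have hcast : ((∑ i, (x i + 1).toNat : ℕ) : ℤ) = ((k + 1 : ℕ) : ℤ) := by
      push_cast
      rw [Finset.sum_congr rfl fun i _ => Int.toNat_of_nonneg (by linarith [h1 i])]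
      rw [Finset.sum_add_distrib, h2]
      simp
    exact_mod_cast hcast
  · intro y hy
    rw [Finset.Nat.mem_antidiagonalTuple] at hy
    rw [hT]
    constructor
    · intro i
      show (-1 : ℤ) ≤ (y i : ℤ) - 1
      have := Int.natCast_nonneg (y i)
      linarith
    · show ∑ i, ((y i : ℤ) - 1) = 0
      have hcast : ((∑ i, y i : ℕ) : ℤ) = ((k + 1 : ℕ) : ℤ) := by rw [hy]
      push_cast at hcast
      rw [Finset.sum_sub_distrib, hcast]
      simp
  · intro x hx
    obtain ⟨h1, _⟩ := (hT x).1 hx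
    funext i
    show ((x i + 1).toNat : ℤ) - 1 = x i
    have := h1 i
    omega
  · intro y _
    funext i
    show ((y i : ℤ) - 1 + 1).toNat = y i
    omega
  · intro x hx
    obtain ⟨h1, _⟩ := (hT x).1 hx
    have h0 : (((x 0 + 1).toNat : ℤ)) - 1 = x 0 := by
      have := h1 0
      omega
    show g (x 0) = g (((x 0 + 1).toNat : ℤ) - 1)
    rw [h0]

/-- If `(X_1, …, X_{k+1})` is uniform on the `(k+1)`-tuples of integers `≥ -1`
summing to `0`, then `E[X_1] = 0` and `Var(X_1) = 2k/(k+2)`. -/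
theorem stmt_2 (k : ℕ) (hk : 1 ≤ k) (T : Finset (Fin (k + 1) → ℤ))
    (hT : ∀ x, x ∈ T ↔ ((∀ i, (-1 : ℤ) ≤ x i) ∧ ∑ i, x i = 0)) :
    (∑ x ∈ T, ((x 0 : ℝ))) / T.card = 0 ∧
    (∑ x ∈ T, ((x 0 : ℝ)) ^ 2) / T.card
      - ((∑ x ∈ T, ((x 0 : ℝ))) / T.card) ^ 2 = 2 * k / (k + 2) := by
  set A := Finset.Nat.antidiagonalTuple (k + 1) (k + 1) with hA
  set C0 : ℝ := ((2 * k + 1).choose k : ℝ) with hC0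
  set C1 : ℝ := ((2 * k + 2).choose (k + 1) : ℝ) with hC1
  set C2 : ℝ := ((2 * k + 3).choose (k + 2) : ℝ) with hC2
  have cardA : (A.card : ℝ) = C0 := by
    rw [hA, aux_card k (k + 1), hC0]
    congr 2
    omega
  have hR1 : ∑ y ∈ A, ((y 0 : ℝ) + 1) = C1 := by
    have h := aux_Rsum k 1 hk
    rw [show 2 * k + 1 + 1 = 2 * k + 2 by ring] at h
    calc ∑ y ∈ A, ((y 0 : ℝ) + 1)
        = ∑ y ∈ A, (((y 0 + 1).choose 1 : ℕ) : ℝ) := by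
          refine Finset.sum_congr rfl fun y _ => ?_
          rw [Nat.choose_one_right]
          push_cast
          ring
      _ = (((2 * k + 2).choose (k + 1) : ℕ) : ℝ) := by rw [← Nat.cast_sum, h]
      _ = C1 := rfl
  have hR2 : ∑ y ∈ A, ((y 0 : ℝ) ^ 2 + 3 * (y 0 : ℝ) + 2) = 2 * C2 := by
    have h := aux_Rsum k 2 hk
    rw [show 2 * k + 1 + 2 = 2 * k + 3 by ring] at h
    calc ∑ y ∈ A, ((y 0 : ℝ) ^ 2 + 3 * (y 0 : ℝ) + 2)
        = ∑ y ∈ A, (2 : ℝ) * (((y 0 + 2).choose 2 : ℕ) : ℝ) := by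
          refine Finset.sum_congr rfl fun y _ => ?_
          have h2 := aux_ch2 (y 0)
          have h3 : ((2 * (y 0 + 2).choose 2 : ℕ) : ℝ)
              = (((y 0 + 2) * (y 0 + 1) : ℕ) : ℝ) := by rw [h2]
          push_cast at h3
          linear_combination -h3
      _ = 2 * C2 := by rw [← Finset.mul_sum, ← Nat.cast_sum, h]
  have hsum1 : ∑ _y ∈ A, (1 : ℝ) = C0 := by
    rw [Finset.sum_const, nsmul_eq_mul, mul_one, cardA]
  have hS1 : ∑ y ∈ A, (y 0 : ℝ) = C1 - C0 := by
    have h := hR1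
    rw [Finset.sum_add_distrib, hsum1] at h
    linarith
  have hS2 : ∑ y ∈ A, ((y 0 : ℝ)) ^ 2 = 2 * C2 - 3 * (C1 - C0) - 2 * C0 := by
    have h := hR2
    rw [Finset.sum_add_distrib, Finset.sum_add_distrib, ← Finset.mul_sum, hS1] at h
    have h1 : ∑ _y ∈ A, (2 : ℝ) = 2 * C0 := by
      rw [Finset.sum_const, nsmul_eq_mul, cardA]
      ring
    rw [h1] at h
    linarith
  have hF1 : C1 = 2 * C0 := by
    have hsymm : (2 * k + 1).choose (k + 1) = (2 * k + 1).choose k := by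
      have h := Nat.choose_symm (n := 2 * k + 1) (k := k) (by omega)
      rw [show 2 * k + 1 - k = k + 1 from by omega] at h
      exact h
    have hps : (2 * k + 2).choose (k + 1) = (2 * k + 1).choose k + (2 * k + 1).choose (k + 1) :=
      Nat.choose_succ_succ (2 * k + 1) k
    rw [hC1, hC0, hps, hsymm]
    push_cast
    ring
  have hF2 : ((k : ℝ) + 2) * C2 = (4 * k + 6) * C0 := by
    have h1 : (2 * k + 2).choose (k + 1) * (k + 1) = (2 * k + 2).choose k * (k + 2) := by
      have h := Nat.choose_succ_right_eq (2 * k + 2) k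
      rw [show 2 * k + 2 - k = k + 2 from by omega] at h
      exact h
    have h2 : (2 * k + 3).choose (k + 2)
        = (2 * k + 2).choose (k + 1) + (2 * k + 2).choose (k + 2) :=
      Nat.choose_succ_succ (2 * k + 2) (k + 1)
    have h3 : (2 * k + 2).choose (k + 2) = (2 * k + 2).choose k := by
      have h := Nat.choose_symm (n := 2 * k + 2) (k := k) (by omega)
      rw [show 2 * k + 2 - k = k + 2 from by omega] at h
      exact h
    have h1R : C1 * ((k : ℝ) + 1) = ((2 * k + 2).choose k : ℝ) * ((k : ℝ) + 2) := by
      rw [hC1]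
      exact_mod_cast congrArg (fun t : ℕ => (t : ℝ)) h1
    have h2R : C2 = C1 + ((2 * k + 2).choose k : ℝ) := by
      rw [hC2, hC1, h2, h3]
      push_cast
      ring
    linear_combination ((k : ℝ) + 2) * h2R - h1R + (2 * (k : ℝ) + 3) * hF1
  have hC0pos : (0 : ℝ) < C0 := by
    rw [hC0]
    exact_mod_cast Nat.choose_pos (by omega)
  have hT1 : ∑ x ∈ T, ((x 0 : ℝ)) = 0 := by
    rw [aux_Tsum T hT (fun z => (z : ℝ))]
    have h : ∑ y ∈ A, (((y 0 : ℤ) - 1 : ℤ) : ℝ) = ∑ y ∈ A, ((y 0 : ℝ) - 1) :=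
      Finset.sum_congr rfl fun y _ => by push_cast; ring
    rw [h, Finset.sum_sub_distrib, hS1, hsum1, hF1]
    ring
  have hT2 : ∑ x ∈ T, ((x 0 : ℝ)) ^ 2 = 2 * C2 - 6 * C0 := by
    rw [aux_Tsum T hT (fun z => (z : ℝ) ^ 2)]
    have h : ∑ y ∈ A, ((((y 0 : ℤ) - 1 : ℤ) : ℝ)) ^ 2
        = ∑ y ∈ A, ((y 0 : ℝ) ^ 2 - 2 * (y 0 : ℝ) + 1) :=
      Finset.sum_congr rfl fun y _ => by push_cast; ring
    rw [h, Finset.sum_add_distrib, Finset.sum_sub_distrib, ← Finset.mul_sum,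
      hS1, hS2, hsum1, hF1]
    ring
  have hTcard : (T.card : ℝ) = C0 := by
    have h := aux_Tsum T hT (fun _ => (1 : ℝ))
    simp only [Finset.sum_const, nsmul_eq_mul, mul_one] at h
    rw [h, cardA]
  constructor
  · rw [hT1]
    simp
  · rw [hT1, hT2, hTcard, zero_div, zero_pow (by norm_num : (2 : ℕ) ≠ 0), sub_zero,
      div_eq_div_iff hC0pos.ne' (by positivity : ((k : ℝ) + 2) ≠ 0)]
    linear_combination 2 * hF2
end

section
/- Let β ∈ (0, 1/4) and f(x) = ((1 - 4βx)^{-1/2} - 1)/(2x) for 0 < x < 1/(4β). The equation f(z) = 1 - 1/z has a solution z > 1 if and only if β ≤ 1/8, and when β ≤ 1/8 the solutions are exactly (1 + 4β ± √(1 - 8β))/(8β). -/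
/-- For `β ∈ (0, 1/4)` and `f(x) = ((1-4βx)^{-1/2} - 1)/(2x)` on `(0, 1/(4β))`,
the equation `f(z) = 1 - 1/z` has a solution `z > 1` iff `β ≤ 1/8`, in which case
the solutions are exactly `(1 + 4β ± √(1-8β))/(8β)`. -/
theorem stmt_7 (β : ℝ) (hβ0 : 0 < β) (hβ : β < 1 / 4) :
    let f : ℝ → ℝ := fun x => ((1 - 4 * β * x) ^ (-(1 / 2) : ℝ) - 1) / (2 * x)
    ((∃ z ∈ Set.Ioo (1 : ℝ) (1 / (4 * β)), f z = 1 - 1 / z) ↔ β ≤ 1 / 8) ∧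
    (β ≤ 1 / 8 →
      ∀ z ∈ Set.Ioo (1 : ℝ) (1 / (4 * β)),
        (f z = 1 - 1 / z ↔
          z = (1 + 4 * β - Real.sqrt (1 - 8 * β)) / (8 * β) ∨
          z = (1 + 4 * β + Real.sqrt (1 - 8 * β)) / (8 * β))) := by
  intro f
  have h4β : (0:ℝ) < 4 * β := by linarith
  have h8β : (0:ℝ) < 8 * β := by linarith
  have key : ∀ z ∈ Set.Ioo (1 : ℝ) (1 / (4 * β)),
      (f z = 1 - 1 / z ↔ 4*β*z^2 - (1+4*β)*z + (1+β) = 0) := by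
    rintro z ⟨hz1, hz2⟩
    have hz0 : (0:ℝ) < z := by linarith
    have hzm : z * (4*β) < 1 := (lt_div_iff₀ h4β).mp hz2
    have ht : (0:ℝ) < 1 - 4*β*z := by nlinarith
    have hst : (0:ℝ) < Real.sqrt (1 - 4*β*z) := Real.sqrt_pos.mpr ht
    have hsq : Real.sqrt (1 - 4*β*z) ^ 2 = 1 - 4*β*z := Real.sq_sqrt ht.le
    have hf : f z = ((Real.sqrt (1 - 4*β*z))⁻¹ - 1) / (2*z) := by
      simp only [f]
      rw [Real.rpow_neg ht.le, ← Real.sqrt_eq_rpow]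
    have step1 : f z = 1 - 1/z ↔ Real.sqrt (1 - 4*β*z) * (2*z - 1) = 1 := by
      rw [hf]
      rw [div_eq_iff (by positivity : (2:ℝ)*z ≠ 0)]
      constructor
      · intro h
        have h' : (Real.sqrt (1 - 4*β*z))⁻¹ = 2*z - 1 := by
          field_simp at h ⊢
          nlinarith [h]
        have := congrArg (· * Real.sqrt (1 - 4*β*z)) h'
        simp only [inv_mul_cancel₀ hst.ne'] at this
        linarith [this]
      · intro h
        have h' : (Real.sqrt (1 - 4*β*z))⁻¹ = 2*z - 1 := by
          rw [inv_eq_iff_eq_inv]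
          exact eq_inv_of_mul_eq_one_left h
        rw [h']
        field_simp
        ring
    have step2 : Real.sqrt (1 - 4*β*z) * (2*z - 1) = 1 ↔ (1 - 4*β*z) * (2*z - 1)^2 = 1 := by
      constructor
      · intro h
        nlinarith [h, hsq]
      · intro h
        have h2z : (0:ℝ) ≤ 2*z - 1 := by linarith
        have : Real.sqrt ((1 - 4*β*z) * (2*z - 1)^2) = 1 := by rw [h, Real.sqrt_one]
        rwa [Real.sqrt_mul ht.le, Real.sqrt_sq h2z] at this
    have step3 : (1 - 4*β*z) * (2*z - 1)^2 = 1 ↔ 4*β*z^2 - (1+4*β)*z + (1+β) = 0 := by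
      have expand : (1 - 4*β*z) * (2*z - 1)^2 - 1 = (-4*z) * (4*β*z^2 - (1+4*β)*z + (1+β)) := by
        ring
      constructor
      · intro h
        have h2 : (-4*z) * (4*β*z^2 - (1+4*β)*z + (1+β)) = 0 := by linarith [expand]
        rcases mul_eq_zero.mp h2 with h3 | h3
        · exact absurd h3 (by nlinarith)
        · exact h3
      · intro h
        nlinarith [expand, h]
    rw [step1, step2, step3]
  constructor
  · constructor
    · rintro ⟨z, hz, hfz⟩
      have hg := (key z hz).mp hfz
      have h18 : 1 - 8*β = (8*β*z - (1+4*β))^2 := by linear_combination (-16*β) * hg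
      nlinarith [sq_nonneg (8*β*z - (1+4*β))]
    · intro h18
      have hs0 : (0:ℝ) ≤ Real.sqrt (1 - 8*β) := Real.sqrt_nonneg _
      have hs2 : Real.sqrt (1 - 8*β) ^ 2 = 1 - 8*β := Real.sq_sqrt (by linarith)
      set s := Real.sqrt (1 - 8*β) with hsdef
      refine ⟨(1 + 4*β + s) / (8*β), ⟨?_, ?_⟩, ?_⟩
      · rw [lt_div_iff₀ h8β]
        nlinarith
      · have hslt : s < 1 - 4*β := by nlinarith
        rw [div_lt_div_iff₀ h8β h4β]
        nlinarith
      · refine (key _ ⟨?_, ?_⟩).mpr ?_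
        · rw [lt_div_iff₀ h8β]; nlinarith
        · have hslt : s < 1 - 4*β := by nlinarith
          rw [div_lt_div_iff₀ h8β h4β]; nlinarith
        · field_simp
          nlinarith [hs2]
  · intro h18 z hz
    have hs0 : (0:ℝ) ≤ Real.sqrt (1 - 8*β) := Real.sqrt_nonneg _
    have hs2 : Real.sqrt (1 - 8*β) ^ 2 = 1 - 8*β := Real.sq_sqrt (by linarith)
    set s := Real.sqrt (1 - 8*β) with hsdef
    rw [key z hz]
    have factor : 4*β*z^2 - (1+4*β)*z + (1+β)
        = 4*β * (z - (1 + 4*β - s)/(8*β)) * (z - (1 + 4*β + s)/(8*β)) := by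
      field_simp
      nlinarith [hs2]
    constructor
    · intro hg
      have h2 : (z - (1 + 4*β - s)/(8*β)) * (z - (1 + 4*β + s)/(8*β)) = 0 := by
        have h3 : 4*β * ((z - (1 + 4*β - s)/(8*β)) * (z - (1 + 4*β + s)/(8*β))) = 0 := by
          rw [← mul_assoc, ← factor]; exact hg
        exact (mul_eq_zero.mp h3).resolve_left (by positivity)
      rcases mul_eq_zero.mp h2 with h3 | h3
      · left; linarith [sub_eq_zero.mp h3]
      · right; linarith [sub_eq_zero.mp h3]
    · rintro (rfl | rfl) <;>
      · rw [factor]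
        field_simp
        ring
end

section
/- Let α ∈ (0,1), n ≥ 1, and let f: [0,1] → ℝ be the piecewise linear interpolation of values f(k/n), k = 0,...,n, satisfying |f(k/n) - f(k'/n)| ≤ C(|k - k'|/n)^α for all 0 ≤ k, k' ≤ n. Then |f(s) - f(t)| ≤ 3C|s - t|^α for all s, t ∈ [0,1]. -/
/-- If `f : [0,1] → ℝ` is the piecewise linear interpolation of its values at the grid
points `k/n` and these values satisfy the Hölder bound
`|f(k/n) - f(k'/n)| ≤ C (|k-k'|/n)^α`, then `|f(s) - f(t)| ≤ 3C |s-t|^α` on `[0,1]`. -/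
theorem stmt_19 (C : ℝ) (hC : 0 < C) (α : ℝ) (hα0 : 0 < α) (hα1 : α < 1)
    (n : ℕ) (hn : 1 ≤ n) (f : ℝ → ℝ)
    (hlin : ∀ k : ℕ, k < n → ∀ s ∈ Set.Icc ((k : ℝ) / n) (((k : ℝ) + 1) / n),
      f s = f ((k : ℝ) / n)
        + (s - (k : ℝ) / n) * n * (f (((k : ℝ) + 1) / n) - f ((k : ℝ) / n)))
    (hgrid : ∀ k k' : ℕ, k ≤ n → k' ≤ n →
      |f ((k : ℝ) / n) - f ((k' : ℝ) / n)| ≤ C * (|(k : ℝ) - (k' : ℝ)| / n) ^ α) :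
    ∀ s ∈ Set.Icc (0 : ℝ) 1, ∀ t ∈ Set.Icc (0 : ℝ) 1,
      |f s - f t| ≤ 3 * C * |s - t| ^ α := by
  have hn0 : (0:ℝ) < n := by exact_mod_cast Nat.lt_of_lt_of_le Nat.zero_lt_one hn
  -- Lemma A : within one grid interval
  have hA : ∀ k : ℕ, k < n → ∀ s ∈ Set.Icc ((k : ℝ) / n) (((k : ℝ) + 1) / n),
      ∀ t ∈ Set.Icc ((k : ℝ) / n) (((k : ℝ) + 1) / n),
      |f s - f t| ≤ C * |s - t| ^ α := by
    intro k hk s hs t ht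
    have hΔ : |f (((k:ℝ)+1)/n) - f ((k:ℝ)/n)| ≤ C * (1/(n:ℝ)) ^ α := by
      have h := hgrid (k+1) k (by omega) (le_of_lt hk)
      have : |((k+1:ℕ):ℝ) - (k:ℝ)| = 1 := by push_cast; simp
      rw [this] at h
      have hcast : (((k+1:ℕ)):ℝ)/n = ((k:ℝ)+1)/n := by push_cast; ring
      rw [hcast] at h
      exact h
    have hdiff : f s - f t = (s - t) * n * (f (((k:ℝ)+1)/n) - f ((k:ℝ)/n)) := by
      rw [hlin k hk s hs, hlin k hk t ht]; ring
    rw [hdiff, abs_mul, abs_mul]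
    have hnn : |(n:ℝ)| = n := abs_of_pos hn0
    rw [hnn]
    set d := |s - t| with hd
    have hd0 : 0 ≤ d := abs_nonneg _
    have hdle : d ≤ 1 / n := by
      rw [hd, abs_sub_le_iff]
      obtain ⟨hs1, hs2⟩ := hs; obtain ⟨ht1, ht2⟩ := ht
      have hwidth : ((k:ℝ)+1)/n - (k:ℝ)/n = 1/n := by field_simp; ring
      constructor <;> linarith
    have key : d * (n:ℝ) * (C * (1/(n:ℝ))^α) ≤ C * d ^ α := by
      rcases eq_or_lt_of_le hd0 with h0 | h0
      · rw [← h0]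
        simp [Real.zero_rpow (ne_of_gt hα0)]
      · have hdn1 : d * n ≤ 1 := by
          rw [le_div_iff₀ hn0] at hdle; linarith
        have e1 : (1/(n:ℝ))^α = (n:ℝ)^(-α) := by
          rw [one_div, Real.rpow_neg (le_of_lt hn0), Real.inv_rpow (le_of_lt hn0)]
        have e2 : (n:ℝ) * (n:ℝ)^(-α) = (n:ℝ)^(1-α) := by
          rw [show (1:ℝ)-α = 1 + (-α) by ring, Real.rpow_add hn0, Real.rpow_one]
        have e3 : d = d^α * d^(1-α) := by
          rw [← Real.rpow_add h0]; norm_num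
        calc d * (n:ℝ) * (C * (1/(n:ℝ))^α)
            = C * (d^α * (d^(1-α) * ((n:ℝ) * (n:ℝ)^(-α)))) := by
              rw [e1]; nth_rewrite 1 [e3]; ring
          _ ≤ C * (d^α * 1) := by
              apply mul_le_mul_of_nonneg_left _ hC.le
              apply mul_le_mul_of_nonneg_left _ (Real.rpow_nonneg hd0 α)
              rw [e2, ← Real.mul_rpow (le_of_lt h0) hn0.le]
              exact Real.rpow_le_one (by positivity) hdn1 (by linarith)
          _ = C * d^α := by ring
    calc d * (n:ℝ) * |f (((k:ℝ)+1)/n) - f ((k:ℝ)/n)|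
        ≤ d * (n:ℝ) * (C * (1/(n:ℝ))^α) := by
          apply mul_le_mul_of_nonneg_left hΔ (by positivity)
      _ ≤ C * d ^ α := key
  -- bracketing lemma
  have hbr : ∀ s ∈ Set.Icc (0:ℝ) 1,
      ((min (⌊(n:ℝ)*s⌋₊) (n-1) : ℕ):ℝ)/n ≤ s ∧
      s ≤ (((min (⌊(n:ℝ)*s⌋₊) (n-1) : ℕ):ℝ)+1)/n := by
    intro s ⟨hs0, hs1⟩
    set k := min (⌊(n:ℝ)*s⌋₊) (n-1) with hkdef
    have hns0 : 0 ≤ (n:ℝ)*s := by positivity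
    constructor
    · rw [div_le_iff₀ hn0]
      have h1 : (k:ℝ) ≤ (⌊(n:ℝ)*s⌋₊ : ℝ) := by
        exact_mod_cast Nat.min_le_left _ _
      have h2 : (⌊(n:ℝ)*s⌋₊ : ℝ) ≤ (n:ℝ)*s := Nat.floor_le hns0
      linarith [mul_comm (n:ℝ) s ▸ h2]
    · rw [le_div_iff₀ hn0]
      by_cases hc : ⌊(n:ℝ)*s⌋₊ ≤ n-1
      · have hk : k = ⌊(n:ℝ)*s⌋₊ := min_eq_left hc
        have := Nat.lt_floor_add_one ((n:ℝ)*s)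
        rw [hk]
        push_cast at this ⊢
        nlinarith
      · have hk : k = n-1 := min_eq_right (by omega)
        have : (k:ℝ) + 1 = (n:ℝ) := by
          rw [hk]; push_cast [Nat.cast_sub hn]; ring
        rw [this]
        nlinarith
  have hklt : ∀ s : ℝ, min (⌊(n:ℝ)*s⌋₊) (n-1) < n := fun s => by
    have := Nat.min_le_right (⌊(n:ℝ)*s⌋₊) (n-1); omega
  -- main one-sided version
  have hmain : ∀ s ∈ Set.Icc (0:ℝ) 1, ∀ t ∈ Set.Icc (0:ℝ) 1, s ≤ t →
      |f s - f t| ≤ 3 * C * |s - t| ^ α := by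
    intro s hs t ht hst
    set k := min (⌊(n:ℝ)*s⌋₊) (n-1) with hkdef
    set m := min (⌊(n:ℝ)*t⌋₊) (n-1) with hmdef
    obtain ⟨hks, hsk⟩ := hbr s hs
    obtain ⟨hmt, htm⟩ := hbr t ht
    have hkm : k ≤ m := by
      apply min_le_min_right
      exact Nat.floor_le_floor (by nlinarith [hs.1, hn0] : (n:ℝ)*s ≤ (n:ℝ)*t)
    have hsmem : s ∈ Set.Icc ((k:ℝ)/n) (((k:ℝ)+1)/n) := ⟨hks, hsk⟩
    have htmem : t ∈ Set.Icc ((m:ℝ)/n) (((m:ℝ)+1)/n) := ⟨hmt, htm⟩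
    have habs : |s - t| = t - s := by rw [abs_sub_comm]; exact abs_of_nonneg (by linarith)
    rcases eq_or_lt_of_le hkm with heq | hlt
    · -- same interval
      have h := hA k (hklt s) s hsmem t (heq ▸ htmem)
      have : C * |s-t|^α ≤ 3*C*|s-t|^α := by nlinarith [Real.rpow_nonneg (abs_nonneg (s-t)) α]
      linarith
    · -- different intervals, k+1 ≤ m
      have hk1m : (k:ℝ) + 1 ≤ (m:ℝ) := by exact_mod_cast hlt
      have hts0 : 0 ≤ t - s := by linarith
      -- three pieces
      have hmem1 : ((k:ℝ)+1)/n ∈ Set.Icc ((k:ℝ)/n) (((k:ℝ)+1)/n) :=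
        ⟨by gcongr; linarith, le_refl _⟩
      have hmem2 : ((m:ℝ))/n ∈ Set.Icc ((m:ℝ)/n) (((m:ℝ)+1)/n) :=
        ⟨le_refl _, by gcongr; linarith⟩
      set u := ((k:ℝ)+1)/n with hu
      set v := ((m:ℝ))/n with hv
      have huv : u ≤ v := by rw [hu, hv]; gcongr
      have hsu : s ≤ u := hsk
      have hvt : v ≤ t := hmt
      have t1 := hA k (hklt s) s hsmem u hmem1
      have t3 := hA m (hklt t) v hmem2 t htmem
      have hmn : m ≤ n := le_trans (Nat.min_le_right _ _) (by omega)
      have t2 : |f u - f v| ≤ C * (((m:ℝ)-((k:ℝ)+1))/n)^α := by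
        have h := hgrid (k+1) m (by omega) hmn
        have e : |((k+1:ℕ):ℝ) - (m:ℝ)| = (m:ℝ)-((k:ℝ)+1) := by
          push_cast
          rw [abs_sub_comm]
          exact abs_of_nonneg (by linarith)
        rw [e] at h
        have ec : (((k+1:ℕ)):ℝ)/n = u := by rw [hu]; push_cast; ring
        rw [ec] at h
        exact h
      -- distance comparisons
      have d1 : |s - u| ≤ t - s := by
        rw [abs_sub_comm, abs_of_nonneg (by linarith)]; linarith
      have d3 : |v - t| ≤ t - s := by
        rw [abs_sub_comm, abs_of_nonneg (by linarith)]; linarith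
      have d2 : ((m:ℝ)-((k:ℝ)+1))/n ≤ t - s := by
        have : ((m:ℝ)-((k:ℝ)+1))/n = v - u := by rw [hu, hv]; ring
        rw [this]; linarith
      have hts : 0 ≤ t - s := by linarith
      have r1 : |s - u|^α ≤ (t-s)^α := Real.rpow_le_rpow (abs_nonneg _) d1 hα0.le
      have r3 : |v - t|^α ≤ (t-s)^α := Real.rpow_le_rpow (abs_nonneg _) d3 hα0.le
      have r2 : (((m:ℝ)-((k:ℝ)+1))/n)^α ≤ (t-s)^α :=
        Real.rpow_le_rpow (div_nonneg (by linarith) hn0.le) d2 hα0.le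
      have tri : |f s - f t| ≤ |f s - f u| + |f u - f v| + |f v - f t| := by
        calc |f s - f t| ≤ |f s - f v| + |f v - f t| := abs_sub_le _ _ _
          _ ≤ (|f s - f u| + |f u - f v|) + |f v - f t| := by
              have := abs_sub_le (f s) (f u) (f v); linarith
      rw [habs]
      have b1 : |f s - f u| ≤ C * (t-s)^α :=
        t1.trans (mul_le_mul_of_nonneg_left r1 hC.le)
      have b2 : |f u - f v| ≤ C * (t-s)^α :=
        t2.trans (mul_le_mul_of_nonneg_left r2 hC.le)
      have b3 : |f v - f t| ≤ C * (t-s)^α :=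
        t3.trans (mul_le_mul_of_nonneg_left r3 hC.le)
      linarith
  intro s hs t ht
  rcases le_total s t with h | h
  · exact hmain s hs t ht h
  · rw [abs_sub_comm (f s), abs_sub_comm s]
    exact hmain t ht s hs h
end
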